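/- arXiv:2508.07709 — 3 statements merged into one kernel-verified Lean document; each statement's English description precedes it below -/
import Mathlib

section
/- If ‖y_k − K x_k‖ ≤ δ for k = 1,…,n, then the operator K_n = Y_n Ξ Λ^{-1} U* satisfies ‖(K_n − K) U Λ‖_HS ≤ 2 √n · δ. -/
/-!
Write `e k = y k - K (x k)` for the data errors. Since `X = U Λ Ξ*` and `Ξ*Ξ = 1`, the `j`-th
column of `(K_n - K) U Λ` is `∑ k, Ξ k j • e k`, the image of `e` under `Ξ*` acting on `Gⁿ`.
Because `Ξ Ξ*` is an orthogonal projection on `Gⁿ`, this map does not increase the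
`ℓ²`-norm, so the squared Hilbert–Schmidt norm is at most `∑ k, ‖e k‖ ^ 2 ≤ n δ ^ 2`.
This gives even the sharper bound `√n δ`.
-/

open scoped RealInnerProductSpace Matrix

section OrthonormalColumns

variable {G ι κ : Type*} [NormedAddCommGroup G] [InnerProductSpace ℝ G] [Fintype ι] [Fintype κ]

lemma sum_inner_sum_smul_comm (Ξ : Matrix ι κ ℝ) (c : κ → G) (e : ι → G) :
    ∑ k, ⟪∑ j, Ξ k j • c j, e k⟫ = ∑ j, ⟪c j, ∑ k, Ξ k j • e k⟫ := by
  simp only [sum_inner, inner_sum, real_inner_smul_left, real_inner_smul_right]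
  exact Finset.sum_comm

lemma sum_smul_sum_smul_of_transpose_mul_self [DecidableEq κ] {Ξ : Matrix ι κ ℝ}
    (hΞ : Ξᵀ * Ξ = 1) (c : κ → G) (j : κ) : ∑ k, Ξ k j • ∑ j', Ξ k j' • c j' = c j := by
  have hentry (j' : κ) : ∑ k, Ξ k j * Ξ k j' = if j = j' then 1 else 0 := by
    simpa [Matrix.mul_apply, Matrix.one_apply] using congrFun (congrFun hΞ j) j'
  calc ∑ k, Ξ k j • ∑ j', Ξ k j' • c j'
      = ∑ j', (∑ k, Ξ k j * Ξ k j') • c j' := by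
        simp only [Finset.smul_sum, smul_smul, Finset.sum_smul]
        exact Finset.sum_comm
    _ = c j := by simp [hentry]

lemma sum_norm_sq_sum_smul_le [DecidableEq κ] {Ξ : Matrix ι κ ℝ} (hΞ : Ξᵀ * Ξ = 1)
    (e : ι → G) : ∑ j, ‖∑ k, Ξ k j • e k‖ ^ 2 ≤ ∑ k, ‖e k‖ ^ 2 := by
  set c : κ → G := fun j => ∑ k, Ξ k j • e k
  set v : ι → G := fun k => ∑ j, Ξ k j • c j
  have hve : ∑ k, ⟪v k, e k⟫ = ∑ j, ‖c j‖ ^ 2 := by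
    simp only [v, sum_inner_sum_smul_comm, c, real_inner_self_eq_norm_sq]
  have hvv : ∑ k, ‖v k‖ ^ 2 = ∑ j, ‖c j‖ ^ 2 := by
    calc ∑ k, ‖v k‖ ^ 2 = ∑ k, ⟪∑ j, Ξ k j • c j, v k⟫ :=
          Finset.sum_congr rfl fun k _ => (real_inner_self_eq_norm_sq (v k)).symm
      _ = ∑ j, ‖c j‖ ^ 2 := by
          rw [sum_inner_sum_smul_comm]
          simp only [v, sum_smul_sum_smul_of_transpose_mul_self hΞ, real_inner_self_eq_norm_sq]
  have hpyth : ∑ k, ‖e k - v k‖ ^ 2 = ∑ k, ‖e k‖ ^ 2 - ∑ j, ‖c j‖ ^ 2 := by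
    simp only [norm_sub_sq_real, Finset.sum_add_distrib, Finset.sum_sub_distrib,
      ← Finset.mul_sum, real_inner_comm (v _), hve, hvv]
    ring
  have : 0 ≤ ∑ k, ‖e k - v k‖ ^ 2 := Finset.sum_nonneg fun _ _ => by positivity
  linarith

end OrthonormalColumns

/-- If `‖y k − K (x k)‖ ≤ δ` for all `k`, then the data-driven operator
`K_n = Y Ξ Λ⁻¹ U*` satisfies `‖(K_n − K) U Λ‖_HS ≤ 2 √n δ`, where `X = U Λ Ξ*`
is the SVD of the image matrix. The column of `(K_n − K) U Λ` with index `j` is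
`σ j • (K_n (U j) − K (U j))`, and the HS norm is the square root of the sum of
squared column norms. -/
theorem stmt3 {H G : Type*} [NormedAddCommGroup H] [InnerProductSpace ℝ H]
    [NormedAddCommGroup G] [InnerProductSpace ℝ G]
    (K : H →L[ℝ] G) {n p : ℕ}
    (x : Fin n → H) (U : Fin p → H) (hU : Orthonormal ℝ U)
    (Ξ : Matrix (Fin n) (Fin p) ℝ) (σ : Fin p → ℝ) (hσ : ∀ j, 0 < σ j)
    (hΞ : ∀ j j', (∑ k, Ξ k j * Ξ k j') = if j = j' then (1:ℝ) else 0)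
    (hX : ∀ k, x k = ∑ j, (σ j * Ξ k j) • U j)
    (y : Fin n → G) (δ : ℝ) (hδ : 0 ≤ δ) (hy : ∀ k, ‖y k - K (x k)‖ ≤ δ) :
    letI Kn : H → G := fun h => ∑ j, ((σ j)⁻¹ * ⟪U j, h⟫) • ∑ k, Ξ k j • y k
    Real.sqrt (∑ j, ‖σ j • (Kn (U j) - K (U j))‖ ^ 2) ≤ 2 * Real.sqrt n * δ := by
  set Kn : H → G := fun h => ∑ j, ((σ j)⁻¹ * ⟪U j, h⟫) • ∑ k, Ξ k j • y k
  have hΞ' : Ξᵀ * Ξ = 1 := by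
    ext j j'
    simp [Matrix.mul_apply, Matrix.one_apply, hΞ]
  have hKn (j : Fin p) : Kn (U j) = (σ j)⁻¹ • ∑ k, Ξ k j • y k := by
    simp [Kn, orthonormal_iff_ite.mp hU, ← smul_smul]
  have hXcol (j : Fin p) : ∑ k, Ξ k j • x k = σ j • U j := by
    simpa [hX, mul_comm, smul_smul] using
      sum_smul_sum_smul_of_transpose_mul_self hΞ' (fun j => σ j • U j) j
  have hcol (j : Fin p) : σ j • (Kn (U j) - K (U j)) = ∑ k, Ξ k j • (y k - K (x k)) := by
    simp only [smul_sub, Finset.sum_sub_distrib, hKn, smul_inv_smul₀ (hσ j).ne', ← map_smul,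
      ← hXcol, map_sum]
  have hsum : ∑ j, ‖σ j • (Kn (U j) - K (U j))‖ ^ 2 ≤ n * δ ^ 2 :=
    calc ∑ j, ‖σ j • (Kn (U j) - K (U j))‖ ^ 2
        ≤ ∑ k, ‖y k - K (x k)‖ ^ 2 := by
          simpa only [hcol] using sum_norm_sq_sum_smul_le hΞ' (fun k => y k - K (x k))
      _ ≤ ∑ _k : Fin n, δ ^ 2 := by gcongr with k; exact hy k
      _ = n * δ ^ 2 := by simp
  calc Real.sqrt (∑ j, ‖σ j • (Kn (U j) - K (U j))‖ ^ 2)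
      ≤ Real.sqrt (n * δ ^ 2) := Real.sqrt_le_sqrt hsum
    _ = Real.sqrt n * δ := by rw [Real.sqrt_mul n.cast_nonneg, Real.sqrt_sq hδ]
    _ ≤ 2 * Real.sqrt n * δ := by nlinarith [Real.sqrt_nonneg n]
end

section
/- In the setting of the previous lemma, without assuming injectivity of K_n|_E, the operator A = U Λ L_n^† satisfies three of the Moore–Penrose axioms: K_n A = P_{range K_n}, A K_n A = A, and K_n A K_n = K_n. -/
open scoped RealInnerProductSpace BigOperators

/-- Without assuming injectivity of `K_n|_E`, the operator `A = U Λ Ldag` satisfies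
three of the Moore–Penrose axioms for `K_n`: `K_n A = P_{range K_n}` (i.e. `K_n A` is
self-adjoint, idempotent and fixes the range of `K_n`), `A K_n A = A`, and
`K_n A K_n = K_n`.  Here `L_n = K_n U Λ` with columns `l j = K_n (σ j • U j)`,
`K_n` vanishes on `(range U)^⊥`, and `Ldag` is the Moore–Penrose inverse of `L_n`. -/
theorem stmt7 {H G : Type*} [NormedAddCommGroup H] [InnerProductSpace ℝ H]
    [NormedAddCommGroup G] [InnerProductSpace ℝ G]
    {n p' : ℕ} (Kn : H →L[ℝ] G)
    (U : Fin p' → H) (hU : Orthonormal ℝ U)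
    (σ : Fin p' → ℝ) (hσ : ∀ j, 0 < σ j)
    (l : Fin p' → G) (hl : ∀ j, l j = Kn (σ j • U j))
    (hker : ∀ h : H, (∀ j, ⟪U j, h⟫ = 0) → Kn h = 0)
    (Ldag : G → Fin p' → ℝ)
    (hL1 : ∀ ξ : Fin p' → ℝ,
      (∑ j, (Ldag (∑ i, ξ i • l i)) j • l j) = ∑ i, ξ i • l i)
    (hL2 : ∀ g : G, Ldag (∑ j, (Ldag g) j • l j) = Ldag g)
    (hL3 : ∀ g g' : G, ⟪∑ j, (Ldag g) j • l j, g'⟫ = ⟪g, ∑ j, (Ldag g') j • l j⟫)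
    (hL4 : ∀ ξ ξ' : Fin p' → ℝ,
      (∑ j, (Ldag (∑ i, ξ i • l i)) j * ξ' j) = ∑ j, ξ j * (Ldag (∑ i, ξ' i • l i)) j) :
    letI A : G → H := fun g => ∑ j, (σ j * (Ldag g) j) • U j
    (∀ g g' : G, ⟪Kn (A g), g'⟫ = ⟪g, Kn (A g')⟫)
    ∧ (∀ g : G, Kn (A (Kn (A g))) = Kn (A g))
    ∧ (∀ h : H, Kn (A (Kn h)) = Kn h)
    ∧ (∀ g : G, A (Kn (A g)) = A g) := by
  set A : G → H := fun g => ∑ j, (σ j * (Ldag g) j) • U j with hA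
  -- key: Kn (A g) = ∑ j, Ldag g j • l j
  have hKA : ∀ g : G, Kn (A g) = ∑ j, (Ldag g) j • l j := by
    intro g
    show Kn (∑ j, (σ j * (Ldag g) j) • U j) = _
    rw [map_sum]
    refine Finset.sum_congr rfl fun j _ => ?_
    rw [hl j, map_smul, map_smul, smul_smul, mul_comm]
  -- Kn h lies in the span of the l j
  have hKn : ∀ h : H, Kn h = ∑ j, ((σ j)⁻¹ * ⟪U j, h⟫) • l j := by
    intro h
    have h0 : Kn (h - ∑ j, ⟪U j, h⟫ • U j) = 0 := by
      apply hker
      intro i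
      rw [inner_sub_right, inner_sum]
      simp only [real_inner_smul_right]
      rw [Finset.sum_eq_single i]
      · have : (⟪U i, U i⟫ : ℝ) = 1 := by
          have := hU.1 i
          rw [real_inner_self_eq_norm_sq, this]; norm_num
        rw [this]; ring
      · intro b _ hb
        rw [hU.2 hb.symm]; ring
      · simp
    have h1 : Kn h = Kn (∑ j, ⟪U j, h⟫ • U j) := by
      have := map_sub Kn h (∑ j, ⟪U j, h⟫ • U j)
      rw [h0] at this
      exact sub_eq_zero.mp this.symm
    rw [h1, map_sum]
    refine Finset.sum_congr rfl fun j _ => ?_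
    rw [hl j, map_smul, map_smul, smul_smul]
    have hne := (hσ j).ne'
    congr 1
    field_simp
  refine ⟨?_, ?_, ?_, ?_⟩
  · intro g g'
    rw [hKA, hKA]; exact hL3 g g'
  · intro g
    rw [hKA, hKA]
    exact hL1 (Ldag g)
  · intro h
    rw [hKA, hKn h]
    exact hL1 _
  · intro g
    show (∑ j, (σ j * (Ldag (Kn (A g))) j) • U j) = ∑ j, (σ j * (Ldag g) j) • U j
    rw [hKA, hL2]
end

section
/- Let y = K x† for some x† ∈ H, and assume K_n restricted to E_n is injective with smallest singular value μ_n > 0. With x_n^{III} = x_n° + U Λ L_n^†(y − y_n°), one has the error decomposition x_n^{III} − x† = (I − P_{E_n})(x_n° − x†) + d_n, where d_n = K_n^† r_n and r_n = (K − K_n)(x† − x_n°) + K x_n° − y_n°; consequently ‖d_n‖ ≤ (1/μ_n)(‖(K − K_n)(x_n° − x†)‖ + ‖y_n° − K x_n°‖). -/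
section Residual

variable {𝕜 E F : Type*} [NontriviallyNormedField 𝕜]
  [SeminormedAddCommGroup E] [NormedSpace 𝕜 E] [SeminormedAddCommGroup F] [NormedSpace 𝕜 F]

/-- The residual `r_n` of the paper. -/
def dataResidual (K Kn : E →L[𝕜] F) (xdag xm : E) (ym : F) : F :=
  (K - Kn) (xdag - xm) + K xm - ym

theorem apply_sub_eq_dataResidual_add (K Kn : E →L[𝕜] F) (xdag xm : E) (ym : F) :
    K xdag - ym = dataResidual K Kn xdag xm ym + Kn (xdag - xm) := by
  simp only [dataResidual, sub_apply, map_sub]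
  abel

theorem dataResidual_eq_neg_sub (K Kn : E →L[𝕜] F) (xdag xm : E) (ym : F) :
    dataResidual K Kn xdag xm ym = -(K - Kn) (xm - xdag) - (ym - K xm) := by
  rw [dataResidual, ← neg_sub xm xdag, map_neg]
  abel

theorem norm_dataResidual_le (K Kn : E →L[𝕜] F) (xdag xm : E) (ym : F) :
    ‖dataResidual K Kn xdag xm ym‖ ≤ ‖(K - Kn) (xm - xdag)‖ + ‖ym - K xm‖ := by
  rw [dataResidual_eq_neg_sub, ← norm_neg ((K - Kn) (xm - xdag))]
  exact norm_sub_le _ _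

theorem add_apply_sub_sub_eq (K Kn : E →L[𝕜] F) (Kdag : F →L[𝕜] E) (P : E →L[𝕜] E)
    (hP : ∀ x, Kdag (Kn x) = P x) (xdag xm : E) (ym : F) :
    (xm + Kdag (K xdag - ym)) - xdag
      = ((xm - xdag) - P (xm - xdag)) + Kdag (dataResidual K Kn xdag xm ym) := by
  rw [apply_sub_eq_dataResidual_add K Kn, map_add, hP, ← neg_sub xm xdag, map_neg]
  abel

theorem norm_apply_dataResidual_le (K Kn : E →L[𝕜] F) (Kdag : F →L[𝕜] E) (xdag xm : E) (ym : F) :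
    ‖Kdag (dataResidual K Kn xdag xm ym)‖
      ≤ ‖Kdag‖ * (‖(K - Kn) (xm - xdag)‖ + ‖ym - K xm‖) :=
  (Kdag.le_opNorm _).trans (by gcongr; exact norm_dataResidual_le K Kn xdag xm ym)

end Residual

theorem stmt8_general {H G : Type*} [NormedAddCommGroup H] [InnerProductSpace ℝ H]
    [NormedAddCommGroup G] [InnerProductSpace ℝ G]
    (K Kn : H →L[ℝ] G) (En : Submodule ℝ H) [FiniteDimensional ℝ En]
    (Kndag : G →L[ℝ] H) (μ : ℝ)
    (hproj : ∀ h : H, Kndag (Kn h) = (Submodule.orthogonalProjection En h : H))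
    (hnorm : ‖Kndag‖ = 1 / μ)
    (xdag xm : H) (ym y : G) (hy : y = K xdag) :
    ((xm + Kndag (y - ym)) - xdag
        = ((xm - xdag) - (Submodule.orthogonalProjection En (xm - xdag) : H))
          + Kndag ((K - Kn) (xdag - xm) + K xm - ym))
    ∧ ‖Kndag ((K - Kn) (xdag - xm) + K xm - ym)‖
        ≤ (1 / μ) * (‖(K - Kn) (xm - xdag)‖ + ‖ym - K xm‖) := by
  subst hy
  exact ⟨add_apply_sub_sub_eq K Kn Kndag En.starProjection hproj xdag xm ym,
    hnorm ▸ norm_apply_dataResidual_le K Kn Kndag xdag xm ym⟩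

/-- Error estimate for Method III.  Let `y = K x†`, let `K_n† = U Λ L_n†` be the
Moore–Penrose inverse of `K_n` (so `K_n† K_n = P_{E_n}` by injectivity of `K_n|_{E_n}`
and `‖K_n†‖ = 1/μ_n`).  With `x_n^{III} = x_n° + K_n†(y − y_n°)` one has
`x_n^{III} − x† = (I − P_{E_n})(x_n° − x†) + d_n`, where `d_n = K_n† r_n` and
`r_n = (K − K_n)(x† − x_n°) + K x_n° − y_n°`, and consequently
`‖d_n‖ ≤ (1/μ_n)(‖(K − K_n)(x_n° − x†)‖ + ‖y_n° − K x_n°‖)`. -/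
theorem stmt8 {H G : Type*} [NormedAddCommGroup H] [InnerProductSpace ℝ H]
    [CompleteSpace H] [NormedAddCommGroup G] [InnerProductSpace ℝ G]
    (K Kn : H →L[ℝ] G) (En : Submodule ℝ H) [FiniteDimensional ℝ En]
    (Kndag : G →L[ℝ] H) (μ : ℝ) (hμ : 0 < μ)
    (hproj : ∀ h : H, Kndag (Kn h) = (Submodule.orthogonalProjection En h : H))
    (hnorm : ‖Kndag‖ = 1 / μ)
    (xdag xm : H) (ym y : G) (hy : y = K xdag) :
    ((xm + Kndag (y - ym)) - xdag
        = ((xm - xdag) - (Submodule.orthogonalProjection En (xm - xdag) : H))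
          + Kndag ((K - Kn) (xdag - xm) + K xm - ym))
    ∧ ‖Kndag ((K - Kn) (xdag - xm) + K xm - ym)‖
        ≤ (1 / μ) * (‖(K - Kn) (xm - xdag)‖ + ‖ym - K xm‖) :=
  stmt8_general K Kn En Kndag μ hproj hnorm xdag xm ym y hy
end
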